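/- Let N = (P, T, Fl, M_init) be a safe marked net and suppose each place p belongs to a distributed place P_p with P_p ∩ M_init = ∅ or P_p ⊆ M_init. Let P' ⊆ P be such that N' = (P', T, Fl restricted to P', M_init ∩ P') is a marked net, and for each p ∈ P, writing P'_p = P_p ∩ P': the adjacent transitions satisfy •(P'_p) ∪ (P'_p)• = •(P_p) ∪ (P_p)•, enables_{P'_p} = enables_{P_p}, and disables_{P'_p} = disables_{P_p}. Then fseq(N') = fseq(N), i.e., N and N' have exactly the same firing sequences. -/

import Mathlib

open Set

structure Net (P T : Type) where
  pre : T → Set P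
  post : T → Set P
  minit : Set P

variable {P T : Type}

def fireable (N : Net P T) (t : T) (M : Set P) : Prop := N.pre t ⊆ M

def fire (N : Net P T) (t : T) (M : Set P) : Set P := (M \ N.pre t) ∪ N.post t

def valid (N : Net P T) : Set P → List T → Prop
  | _, [] => True
  | M, t :: σ => fireable N t M ∧ valid N (fire N t M) σ

def runFrom (N : Net P T) (M : Set P) (σ : List T) : Set P :=
  σ.foldl (fun M t => fire N t M) M

def isFiringSeq (N : Net P T) (σ : List T) : Prop := valid N N.minit σ

def reachable (N : Net P T) (M : Set P) : Prop :=
  ∃ σ, isFiringSeq N σ ∧ runFrom N N.minit σ = M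

def safe (N : Net P T) : Prop :=
  ∀ M, reachable N M → ∀ t, fireable N t M → (N.post t \ N.pre t) ∩ M = ∅

/-- transitions inserting tokens into some place of `Q` (the set `•Q`). -/
def preQ (N : Net P T) (Q : Set P) : Set T := {t | (N.post t ∩ Q).Nonempty}

/-- transitions removing tokens from some place of `Q` (the set `Q•`). -/
def postQ (N : Net P T) (Q : Set P) : Set T := {t | (N.pre t ∩ Q).Nonempty}

def adjQ (N : Net P T) (Q : Set P) : Set T := preQ N Q ∪ postQ N Q

def insQ (N : Net P T) (Q : Set P) : Set T := preQ N Q \ postQ N Q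

def remQ (N : Net P T) (Q : Set P) : Set T := postQ N Q \ preQ N Q

def readQ (N : Net P T) (Q : Set P) : Set T :=
  {t ∈ adjQ N Q | N.pre t ∩ Q = N.post t ∩ Q}

def enablesQ (N : Net P T) (Q : Set P) : Set (T × T) :=
  {tu | (Q ∩ (N.post tu.1 \ N.pre tu.1) ∩ N.pre tu.2).Nonempty}

def disablesQ (N : Net P T) (Q : Set P) : Set (T × T) :=
  {tu | (Q ∩ (N.pre tu.1 \ N.post tu.1) ∩ N.pre tu.2).Nonempty}

def postList (N : Net P T) (l : List T) : Set P := ⋃ t ∈ l, N.post t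

def epreList (N : Net P T) (l : List T) : Set P := ⋃ t ∈ l, (N.pre t \ N.post t)

def isInSeq (N : Net P T) (Q : Set P) (σ : List T) : Prop :=
  σ ≠ [] ∧ (∀ t ∈ σ, t ∈ insQ N Q ∪ readQ N Q) ∧
  (∀ t ∈ σ.head?, t ∈ insQ N Q) ∧
  ∀ i (h : i < σ.length), 0 < i →
    Q ∩ N.pre (σ.get ⟨i, h⟩) ⊆ postList N (σ.take i) ∧
    Q ∩ (N.post (σ.get ⟨i, h⟩) \ N.pre (σ.get ⟨i, h⟩)) ∩ postList N (σ.take i) = ∅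

def isCInSeq (N : Net P T) (Q : Set P) (σ : List T) : Prop :=
  isInSeq N Q σ ∧ Q ⊆ postList N σ

def isOutSeq (N : Net P T) (Q : Set P) (σ : List T) : Prop :=
  σ ≠ [] ∧ (∀ t ∈ σ, t ∈ remQ N Q ∪ readQ N Q) ∧
  (∀ t ∈ σ.head?, t ∈ remQ N Q) ∧
  ∀ i (h : i < σ.length), 0 < i →
    Q ∩ N.pre (σ.get ⟨i, h⟩) ⊆ Q \ epreList N (σ.take i)

def isCOutSeq (N : Net P T) (Q : Set P) (σ : List T) : Prop :=
  isOutSeq N Q σ ∧ Q ⊆ epreList N σ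

def distPlace (N : Net P T) (Q : Set P) : Prop :=
  Q.Nonempty ∧
  adjQ N Q = insQ N Q ∪ remQ N Q ∪ readQ N Q ∧
  (∀ t ∈ insQ N Q, ∀ u ∈ remQ N Q, (t, u) ∈ enablesQ N Q) ∧
  (∀ σ, isInSeq N Q σ → ∃ τ, σ <+: τ ∧ isCInSeq N Q τ) ∧
  (∀ σ, isOutSeq N Q σ → ∃ τ, σ <+: τ ∧ isCOutSeq N Q τ)

def pureDP (N : Net P T) (Q : Set P) : Prop := postQ N Q ∩ preQ N Q = ∅

def separated (N : Net P T) (Q R : Set P) : Prop := adjQ N Q ∩ adjQ N R = ∅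

/-- the net obtained by restricting the places of `N` to `P'` -/
def restrictNet (N : Net P T) (P' : Set P) : Net P T where
  pre t := N.pre t ∩ P'
  post t := N.post t ∩ P'
  minit := N.minit ∩ P'

theorem mem_postList {N : Net P T} {x : P} {l : List T} :
    x ∈ postList N l ↔ ∃ t ∈ l, x ∈ N.post t := by simp [postList]

theorem mem_epreList {N : Net P T} {x : P} {l : List T} :
    x ∈ epreList N l ↔ ∃ t ∈ l, x ∈ N.pre t ∧ x ∉ N.post t := by
  simp only [epreList, Set.mem_iUnion, Set.mem_diff]; aesop

theorem postList_append (N : Net P T) (l₁ l₂ : List T) :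
    postList N (l₁ ++ l₂) = postList N l₁ ∪ postList N l₂ := by
  ext x; simp only [mem_postList, List.mem_append, Set.mem_union]; aesop

theorem epreList_append (N : Net P T) (l₁ l₂ : List T) :
    epreList N (l₁ ++ l₂) = epreList N l₁ ∪ epreList N l₂ := by
  ext x; simp only [mem_epreList, List.mem_append, Set.mem_union]; aesop

theorem runFrom_append (N : Net P T) (M : Set P) (l₁ l₂ : List T) :
    runFrom N M (l₁ ++ l₂) = runFrom N (runFrom N M l₁) l₂ :=
  List.foldl_append

theorem runFrom_single (N : Net P T) (M : Set P) (t : T) :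
    runFrom N M [t] = fire N t M := rfl

theorem valid_append (N : Net P T) (M : Set P) (l₁ l₂ : List T) :
    valid N M (l₁ ++ l₂) ↔ valid N M l₁ ∧ valid N (runFrom N M l₁) l₂ := by
  induction l₁ generalizing M with
  | nil => simp [valid, runFrom]
  | cons t l ih => simp [valid, runFrom, ih, and_assoc, List.foldl_cons]

theorem reachable_fire {N : Net P T} {M : Set P} {t : T}
    (hM : reachable N M) (hf : fireable N t M) : reachable N (fire N t M) := by
  obtain ⟨σ, hv, hrun⟩ := hM
  refine ⟨σ ++ [t], ?_, ?_⟩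
  · rw [isFiringSeq, valid_append]
    exact ⟨hv, by simp [valid, hrun]; exact hf⟩
  · rw [runFrom_append, hrun, runFrom_single]

theorem exists_first_post {N : Net P T} {x : P} :
    ∀ {l : List T}, x ∈ postList N l →
    ∃ j, ∃ hj : j < l.length, x ∈ N.post (l.get ⟨j, hj⟩) ∧ x ∉ postList N (l.take j)
  | [], h => by simp [mem_postList] at h
  | t :: l, h => by
    by_cases hx : x ∈ N.post t
    · exact ⟨0, by simp, hx, by simp [mem_postList]⟩
    · have hxl : x ∈ postList N l := by
        rcases mem_postList.1 h with ⟨u, hu, hxu⟩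
        rcases List.mem_cons.1 hu with rfl | hu
        · exact absurd hxu hx
        · exact mem_postList.2 ⟨u, hu, hxu⟩
      obtain ⟨j, hj, h1, h2⟩ := exists_first_post hxl
      refine ⟨j + 1, by simpa using Nat.succ_lt_succ hj, h1, ?_⟩
      simp only [List.take_succ_cons, mem_postList, List.mem_cons] at h2 ⊢
      rintro ⟨u, rfl | hu, hxu⟩
      · exact hx hxu
      · exact h2 ⟨u, hu, hxu⟩



theorem insQ_pre {N : Net P T} {Q : Set P} {t : T} (h : t ∈ insQ N Q) :
    ∀ x ∈ Q, x ∉ N.pre t := fun x hxQ hxp => h.2 ⟨x, hxp, hxQ⟩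

theorem insQ_post {N : Net P T} {Q : Set P} {t : T} (h : t ∈ insQ N Q) :
    (N.post t ∩ Q).Nonempty := h.1

theorem remQ_post {N : Net P T} {Q : Set P} {t : T} (h : t ∈ remQ N Q) :
    ∀ x ∈ Q, x ∉ N.post t := fun x hxQ hxp => h.2 ⟨x, hxp, hxQ⟩

theorem remQ_pre {N : Net P T} {Q : Set P} {t : T} (h : t ∈ remQ N Q) :
    (N.pre t ∩ Q).Nonempty := h.1

theorem readQ_eq {N : Net P T} {Q : Set P} {t : T} (h : t ∈ readQ N Q) :
    N.pre t ∩ Q = N.post t ∩ Q := h.2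

theorem mem_adjQ_of_pre {N : Net P T} {Q : Set P} {t : T} {x : P}
    (h1 : x ∈ N.pre t) (h2 : x ∈ Q) : t ∈ adjQ N Q := Or.inr ⟨x, h1, h2⟩

theorem mem_adjQ_of_post {N : Net P T} {Q : Set P} {t : T} {x : P}
    (h1 : x ∈ N.post t) (h2 : x ∈ Q) : t ∈ adjQ N Q := Or.inl ⟨x, h1, h2⟩

theorem classify {N : Net P T} {Q : Set P} (hQ : distPlace N Q) {t : T}
    (ht : t ∈ adjQ N Q) : t ∈ insQ N Q ∨ t ∈ remQ N Q ∨ t ∈ readQ N Q := by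
  have h := hQ.2.1
  rw [h] at ht
  rcases ht with (h | h) | h
  · exact Or.inl h
  · exact Or.inr (Or.inl h)
  · exact Or.inr (Or.inr h)

theorem isInSeq_append {N : Net P T} {Q : Set P} {σ : List T} {t : T}
    (hσ : σ = [] ∨ isInSeq N Q σ) (ht : t ∈ insQ N Q)
    (hdisj : ∀ x ∈ Q, x ∈ N.post t → x ∉ postList N σ) :
    isInSeq N Q (σ ++ [t]) := by
  refine ⟨by simp, ?_, ?_, ?_⟩
  · intro x hx
    rcases List.mem_append.1 hx with h | h
    · rcases hσ with rfl | hσ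
      · simp at h
      · exact hσ.2.1 x h
    · simp at h; subst h; exact Or.inl ht
  · rcases hσ with rfl | hσ
    · intro x hx; simp at hx; subst hx; exact ht
    · cases σ with
      | nil => exact absurd rfl hσ.1
      | cons a l =>
        intro x hx
        simp at hx; subst hx
        exact hσ.2.2.1 a (by simp)
  · intro i h hi
    have hlen : i < σ.length + 1 := by simpa using h
    by_cases hlt : i < σ.length
    · have hget : (σ ++ [t]).get ⟨i, h⟩ = σ.get ⟨i, hlt⟩ := (by simp only [List.get_eq_getElem]; exact List.getElem_append_left hlt)
      have htk : (σ ++ [t]).take i = σ.take i := by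
        rw [List.take_append]
        have : i - σ.length = 0 := by omega
        rw [this]; simp
      rcases hσ with rfl | hσ
      · simp at hlt
      · have := hσ.2.2.2 i hlt hi
        rw [hget, htk]
        exact this
    · have hi' : i = σ.length := by omega
      subst hi'
      have hget : (σ ++ [t]).get ⟨σ.length, h⟩ = t := by
        simp only [List.get_eq_getElem]
        exact List.getElem_concat_length rfl _
      have htk : (σ ++ [t]).take σ.length = σ := List.take_left
      rw [hget, htk]
      constructor
      · rintro x ⟨hxQ, hxp⟩
        exact absurd hxp (insQ_pre ht x hxQ)
      · apply Set.eq_empty_iff_forall_notMem.2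
        rintro x ⟨⟨hxQ, hx1, _⟩, hx2⟩
        exact hdisj x hxQ hx1 hx2

theorem isOutSeq_single {N : Net P T} {Q : Set P} {t : T} (ht : t ∈ remQ N Q) :
    isOutSeq N Q [t] := by
  refine ⟨by simp, ?_, ?_, ?_⟩
  · intro x hx; simp at hx; subst hx; exact Or.inl ht
  · intro x hx; simp at hx; subst hx; exact ht
  · intro i h hi; simp at h; omega

theorem isOutSeq_append {N : Net P T} {Q : Set P} {ρ : List T} {t : T}
    (hρ : isOutSeq N Q ρ) (ht : t ∈ remQ N Q)
    (hpre : Q ∩ N.pre t ⊆ Q \ epreList N ρ) :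
    isOutSeq N Q (ρ ++ [t]) := by
  refine ⟨by simp, ?_, ?_, ?_⟩
  · intro x hx
    rcases List.mem_append.1 hx with h | h
    · exact hρ.2.1 x h
    · simp at h; subst h; exact Or.inl ht
  · cases ρ with
    | nil => exact absurd rfl hρ.1
    | cons a l =>
      intro x hx
      simp at hx; subst hx
      exact hρ.2.2.1 a (by simp)
  · intro i h hi
    by_cases hlt : i < ρ.length
    · have hget : (ρ ++ [t]).get ⟨i, h⟩ = ρ.get ⟨i, hlt⟩ := (by simp only [List.get_eq_getElem]; exact List.getElem_append_left hlt)
      have htk : (ρ ++ [t]).take i = ρ.take i := by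
        rw [List.take_append]
        have : i - ρ.length = 0 := by omega
        rw [this]; simp
      rw [hget, htk]
      exact hρ.2.2.2 i hlt hi
    · have hlen : i < ρ.length + 1 := by simpa using h
      have hi' : i = ρ.length := by omega
      subst hi'
      have hget : (ρ ++ [t]).get ⟨ρ.length, h⟩ = t := by
        simp only [List.get_eq_getElem]
        exact List.getElem_concat_length rfl _
      have htk : (ρ ++ [t]).take ρ.length = ρ := List.take_left
      rw [hget, htk]
      exact hpre


def InState (N : Net P T) (Q M : Set P) : Prop :=
  ∃ σ : List T, (σ = [] ∨ isInSeq N Q σ) ∧ Q ∩ M = Q ∩ postList N σ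

def OutState (N : Net P T) (Q M : Set P) : Prop :=
  ∃ ρ : List T, isOutSeq N Q ρ ∧ Q ∩ M = Q \ epreList N ρ

def Phase (N : Net P T) (Q M : Set P) : Prop :=
  InState N Q M ∨ Q ⊆ M ∨ OutState N Q M

theorem phase_congr {N : Net P T} {Q M M' : Set P} (h : Q ∩ M' = Q ∩ M) :
    Phase N Q M → Phase N Q M' := by
  rintro (⟨σ, hσ, hm⟩ | hfull | ⟨ρ, hρ, hm⟩)
  · exact Or.inl ⟨σ, hσ, h.trans hm⟩
  · refine Or.inr (Or.inl fun x hx => ?_)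
    have : x ∈ Q ∩ M := ⟨hx, hfull hx⟩
    rw [← h] at this; exact this.2
  · exact Or.inr (Or.inr ⟨ρ, hρ, h.trans hm⟩)

theorem no_ins_at_out {N : Net P T} {Q : Set P} (hQ : distPlace N Q)
    {ρ : List T} (hρ : isOutSeq N Q ρ) {t : T} (ht : t ∈ insQ N Q)
    (hdisj : ∀ x ∈ Q, x ∈ N.post t → x ∈ epreList N ρ)
    {q : P} (hq : q ∈ Q) (hqρ : q ∉ epreList N ρ) : False := by
  obtain ⟨π, ⟨δ, rfl⟩, hπ, hcov⟩ := hQ.2.2.2.2 ρ hρ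
  have hqπ : q ∈ epreList N (ρ ++ δ) := hcov hq
  obtain ⟨v, hv, hqv1, hqv2⟩ := mem_epreList.1 hqπ
  have hvδ : v ∈ δ := by
    rcases List.mem_append.1 hv with h | h
    · exact absurd (mem_epreList.2 ⟨v, h, hqv1, hqv2⟩) hqρ
    · exact h
  obtain ⟨⟨k, hk⟩, hvk⟩ := List.mem_iff_get.1 hvδ
  have hi : ρ.length + k < (ρ ++ δ).length := by simp; omega
  have hget : (ρ ++ δ).get ⟨ρ.length + k, hi⟩ = v := by
    simp only [List.get_eq_getElem]
    rw [List.getElem_append_right (by omega)]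
    simp only [Nat.add_sub_cancel_left]
    simpa [List.get_eq_getElem] using hvk
  have h0 : 0 < ρ.length + k := by
    have := List.length_pos_iff.2 hρ.1; omega
  have hcond := hπ.2.2.2 (ρ.length + k) hi h0
  rw [hget] at hcond
  have htake : epreList N ρ ⊆ epreList N ((ρ ++ δ).take (ρ.length + k)) := by
    rw [List.take_append, List.take_of_length_le (by omega), epreList_append]
    exact Set.subset_union_left
  -- v is a rem transition
  have hvrem : v ∈ remQ N Q := by
    rcases hπ.2.1 v hv with h | h
    · exact h
    · exfalso
      have : q ∈ N.post v ∩ Q := by rw [← readQ_eq h]; exact ⟨hqv1, hq⟩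
      exact hqv2 this.1
  obtain ⟨s, hs⟩ := hQ.2.2.1 t ht v hvrem
  obtain ⟨⟨hsQ, hs1, _⟩, hs3⟩ := hs
  have hsin : s ∈ Q \ epreList N ((ρ ++ δ).take (ρ.length + k)) := hcond ⟨hsQ, hs3⟩
  exact hsin.2 (htake (hdisj s hsQ hs1))

theorem crux {N : Net P T} {Q Pl : Set P} (hQ : distPlace N Q)
    (hadjQ : adjQ N (Q ∩ Pl) = adjQ N Q)
    (henQ : enablesQ N (Q ∩ Pl) = enablesQ N Q)
    (hdisQ : disablesQ N (Q ∩ Pl) = disablesQ N Q)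
    {M : Set P} (hph : Phase N Q M) {u : T}
    (hu : Q ∩ Pl ∩ N.pre u ⊆ M) : Q ∩ N.pre u ⊆ M := by
  rintro p ⟨hpQ, hpu⟩
  by_contra hpM
  rcases hph with ⟨σ, hσ, hmark⟩ | hfull | ⟨ρ, hρ, hmark⟩
  · have hmark' := Set.ext_iff.1 hmark
    have hpσ : p ∉ postList N σ := fun h => hpM ((hmark' p).2 ⟨hpQ, h⟩).2
    rcases hσ with rfl | hσ
    · -- σ = [] : Q ∩ M = ∅
      have huQ : u ∈ adjQ N Q := mem_adjQ_of_pre hpu hpQ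
      rw [← hadjQ] at huQ
      have hw : (N.pre u ∩ (Q ∩ Pl)).Nonempty := by
        rcases huQ with h | h
        · rcases classify hQ (mem_adjQ_of_pre hpu hpQ) with hi | hr | hrd
          · exact absurd ⟨p, hpu, hpQ⟩ hi.2
          · obtain ⟨w, hw1, hw2, _⟩ := h
            exact absurd hw1 (remQ_post hr w hw2)
          · obtain ⟨w, hw1, hw2, hw3⟩ := h
            have : w ∈ N.pre u ∩ Q := by rw [readQ_eq hrd]; exact ⟨hw1, hw2⟩
            exact ⟨w, this.1, this.2, hw3⟩
        · exact h
      obtain ⟨w, hw1, hw2, hw3⟩ := hw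
      have hwM : w ∈ M := hu ⟨⟨hw2, hw3⟩, hw1⟩
      have : w ∈ Q ∩ postList N [] := hmark ▸ ⟨hw2, hwM⟩
      simp [mem_postList] at this
    · -- σ ≠ []
      obtain ⟨τ, ⟨δ, rfl⟩, hτ, hcov⟩ := hQ.2.2.2.1 σ hσ
      have hpτ : p ∈ postList N (σ ++ δ) := hcov hpQ
      obtain ⟨j, hj, hpj, hpt⟩ := exists_first_post hpτ
      have hjσ : σ.length ≤ j := by
        by_contra hlt
        push_neg at hlt
        apply hpσ
        apply mem_postList.2
        refine ⟨σ.get ⟨j, hlt⟩, List.get_mem _ ⟨j, hlt⟩, ?_⟩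
        have : (σ ++ δ).get ⟨j, hj⟩ = σ.get ⟨j, hlt⟩ := (by simp only [List.get_eq_getElem]; exact List.getElem_append_left hlt)
        rwa [this] at hpj
      have hj0 : 0 < j := by
        have := List.length_pos_iff.2 hσ.1; omega
      obtain ⟨hc1, hc2⟩ := hτ.2.2.2 j hj hj0
      set v := (σ ++ δ).get ⟨j, hj⟩ with hv
      have hpsub : postList N σ ⊆ postList N ((σ ++ δ).take j) := by
        rw [List.take_append, List.take_of_length_le hjσ, postList_append]
        exact Set.subset_union_left
      have hpv : p ∉ N.pre v := fun h => hpt (hc1 ⟨hpQ, h⟩)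
      have hev : (v, u) ∈ enablesQ N Q := ⟨p, ⟨hpQ, hpj, hpv⟩, hpu⟩
      rw [← henQ] at hev
      obtain ⟨w, ⟨⟨hwQ, hwPl⟩, hw2⟩, hw3⟩ := hev
      have hwM : w ∈ M := hu ⟨⟨hwQ, hwPl⟩, hw3⟩
      have hwσ : w ∈ postList N σ := ((hmark' w).1 ⟨hwQ, hwM⟩).2
      exact Set.eq_empty_iff_forall_notMem.1 hc2 w ⟨⟨hwQ, hw2⟩, hpsub hwσ⟩
  · exact hpM (hfull hpQ)
  · have hmark' := Set.ext_iff.1 hmark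
    have hpρ : p ∈ epreList N ρ := by
      by_contra h
      exact hpM ((hmark' p).2 ⟨hpQ, h⟩).2
    obtain ⟨v, hvρ, hpv1, hpv2⟩ := mem_epreList.1 hpρ
    have hdv : (v, u) ∈ disablesQ N Q := ⟨p, ⟨hpQ, hpv1, hpv2⟩, hpu⟩
    rw [← hdisQ] at hdv
    obtain ⟨w, ⟨⟨hwQ, hwPl⟩, hw1, hw2⟩, hw3⟩ := hdv
    have hwM : w ∈ M := hu ⟨⟨hwQ, hwPl⟩, hw3⟩
    have : w ∈ Q \ epreList N ρ := hmark ▸ ⟨hwQ, hwM⟩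
    exact this.2 (mem_epreList.2 ⟨v, hvρ, hw1, hw2⟩)


theorem phase_step {N : Net P T} {Q : Set P} (hQ : distPlace N Q) (hs : safe N)
    {M : Set P} {t : T} (hM : reachable N M) (hf : fireable N t M)
    (hph : Phase N Q M) : Phase N Q (fire N t M) := by
  have hsafe' : ∀ x, x ∈ N.post t → x ∉ N.pre t → x ∉ M := fun x h1 h2 h3 =>
    Set.eq_empty_iff_forall_notMem.1 (hs M hM t hf) x ⟨⟨h1, h2⟩, h3⟩
  by_cases hadj : t ∈ adjQ N Q
  case neg =>
    have hpre : ∀ x ∈ Q, x ∉ N.pre t := fun x hx hp => hadj (mem_adjQ_of_pre hp hx)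
    have hpost : ∀ x ∈ Q, x ∉ N.post t := fun x hx hp => hadj (mem_adjQ_of_post hp hx)
    apply phase_congr ?_ hph
    ext x
    simp only [Set.mem_inter_iff, fire, Set.mem_union, Set.mem_diff]
    constructor
    · rintro ⟨hxQ, ⟨hxM, _⟩ | hxp⟩
      · exact ⟨hxQ, hxM⟩
      · exact absurd hxp (hpost x hxQ)
    · rintro ⟨hxQ, hxM⟩
      exact ⟨hxQ, Or.inl ⟨hxM, hpre x hxQ⟩⟩
  case pos =>
    rcases classify hQ hadj with hins | hrem | hread
    · -- insertion transition
      have hpreQ : ∀ x ∈ Q, x ∉ N.pre t := insQ_pre hins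
      have hdisjM : ∀ x ∈ Q, x ∈ N.post t → x ∉ M := fun x hxQ hxp =>
        hsafe' x hxp (hpreQ x hxQ)
      rcases hph with ⟨σ, hσ, hmark⟩ | hfull | ⟨ρ, hρ, hmark⟩
      · have hmark' := Set.ext_iff.1 hmark
        refine Or.inl ⟨σ ++ [t], Or.inr (isInSeq_append hσ hins ?_), ?_⟩
        · intro x hxQ hxp hxσ
          exact hdisjM x hxQ hxp ((hmark' x).2 ⟨hxQ, hxσ⟩).2
        · ext x
          rw [postList_append]
          simp only [Set.mem_inter_iff, fire, Set.mem_union, Set.mem_diff]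
          constructor
          · rintro ⟨hxQ, ⟨hxM, _⟩ | hxp⟩
            · exact ⟨hxQ, Or.inl ((hmark' x).1 ⟨hxQ, hxM⟩).2⟩
            · exact ⟨hxQ, Or.inr (mem_postList.2 ⟨t, by simp, hxp⟩)⟩
          · rintro ⟨hxQ, hx | hx⟩
            · exact ⟨hxQ, Or.inl ⟨((hmark' x).2 ⟨hxQ, hx⟩).2, hpreQ x hxQ⟩⟩
            · rcases mem_postList.1 hx with ⟨u, hu, hxu⟩
              simp at hu; subst hu
              exact ⟨hxQ, Or.inr hxu⟩
      · obtain ⟨x, hx1, hx2⟩ := insQ_post hins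
        exact absurd (hfull hx2) (hdisjM x hx2 hx1)
      · by_cases hQM : (Q ∩ M).Nonempty
        · obtain ⟨q, hqQ, hqM⟩ := hQM
          have hmark' := Set.ext_iff.1 hmark
          have hq : q ∉ epreList N ρ := ((hmark' q).1 ⟨hqQ, hqM⟩).2
          exact (no_ins_at_out hQ hρ hins (fun x hxQ hxp => by
            by_contra h
            exact hdisjM x hxQ hxp ((hmark' x).2 ⟨hxQ, h⟩).2) hqQ hq).elim
        · have hQM' : ∀ x ∈ Q, x ∉ M := fun x hx hm => hQM ⟨x, hx, hm⟩
          refine Or.inl ⟨[t], Or.inr ?_, ?_⟩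
          · have := isInSeq_append (N := N) (Q := Q) (σ := []) (Or.inl rfl) hins
              (by intro x _ _ hx; simp [mem_postList] at hx)
            simpa using this
          · ext x
            simp only [Set.mem_inter_iff, fire, Set.mem_union, Set.mem_diff, mem_postList]
            constructor
            · rintro ⟨hxQ, ⟨hxM, _⟩ | hxp⟩
              · exact absurd hxM (hQM' x hxQ)
              · exact ⟨hxQ, t, by simp, hxp⟩
            · rintro ⟨hxQ, u, hu, hxu⟩
              simp at hu; subst hu
              exact ⟨hxQ, Or.inr hxu⟩
    · -- removal transition
      have hpostQ : ∀ x ∈ Q, x ∉ N.post t := remQ_post hrem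
      have hfull_step : Q ⊆ M → Phase N Q (fire N t M) := by
        intro hQM
        refine Or.inr (Or.inr ⟨[t], isOutSeq_single hrem, ?_⟩)
        ext x
        simp only [Set.mem_inter_iff, fire, Set.mem_union, Set.mem_diff, mem_epreList]
        constructor
        · rintro ⟨hxQ, ⟨hxM, hxp⟩ | hxp⟩
          · exact ⟨hxQ, by rintro ⟨u, hu, h1, h2⟩; simp at hu; subst hu; exact hxp h1⟩
          · exact absurd hxp (hpostQ x hxQ)
        · rintro ⟨hxQ, hx⟩
          have hxp : x ∉ N.pre t := fun h => hx ⟨t, by simp, h, hpostQ x hxQ⟩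
          exact ⟨hxQ, Or.inl ⟨hQM hxQ, hxp⟩⟩
      rcases hph with ⟨σ, hσ, hmark⟩ | hfull | ⟨ρ, hρ, hmark⟩
      · have hmark' := Set.ext_iff.1 hmark
        by_cases hsub : ∀ x ∈ Q, x ∈ postList N σ
        · exact hfull_step fun x hx => ((hmark' x).2 ⟨hx, hsub x hx⟩).2
        · push_neg at hsub
          obtain ⟨q, hqQ, hqσ⟩ := hsub
          exfalso
          rcases hσ with rfl | hσ
          · obtain ⟨x, hx1, hx2⟩ := remQ_pre hrem
            have : x ∈ Q ∩ postList N [] := (hmark' x).1 ⟨hx2, hf hx1⟩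
            simp [mem_postList] at this
          · obtain ⟨τ, ⟨δ, rfl⟩, hτ, hcov⟩ := hQ.2.2.2.1 σ hσ
            have hqτ : q ∈ postList N (σ ++ δ) := hcov hqQ
            obtain ⟨j, hj, hqj, hqt⟩ := exists_first_post hqτ
            have hjσ : σ.length ≤ j := by
              by_contra hlt; push_neg at hlt
              apply hqσ
              apply mem_postList.2
              refine ⟨σ.get ⟨j, hlt⟩, List.get_mem _ ⟨j, hlt⟩, ?_⟩
              have he : (σ ++ δ).get ⟨j, hj⟩ = σ.get ⟨j, hlt⟩ := (by simp only [List.get_eq_getElem]; exact List.getElem_append_left hlt)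
              rwa [he] at hqj
            have hj0 : 0 < j := by have := List.length_pos_iff.2 hσ.1; omega
            obtain ⟨hc1, hc2⟩ := hτ.2.2.2 j hj hj0
            set v := (σ ++ δ).get ⟨j, hj⟩ with hv
            have hqv : q ∉ N.pre v := fun h => hqt (hc1 ⟨hqQ, h⟩)
            have hvins : v ∈ insQ N Q := by
              rcases hτ.2.1 v (List.get_mem _ ⟨j, hj⟩) with h | h
              · exact h
              · exfalso
                have : q ∈ N.pre v ∩ Q := by rw [readQ_eq h]; exact ⟨hqj, hqQ⟩
                exact hqv this.1
            obtain ⟨s, ⟨hsQ, hs2⟩, hs3⟩ := hQ.2.2.1 v hvins t hrem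
            have hpsub : postList N σ ⊆ postList N ((σ ++ δ).take j) := by
              rw [List.take_append, List.take_of_length_le hjσ, postList_append]
              exact Set.subset_union_left
            have hsσ : s ∈ postList N σ := ((hmark' s).1 ⟨hsQ, hf hs3⟩).2
            exact Set.eq_empty_iff_forall_notMem.1 hc2 s ⟨⟨hsQ, hs2⟩, hpsub hsσ⟩
      · exact hfull_step hfull
      · have hmark' := Set.ext_iff.1 hmark
        refine Or.inr (Or.inr ⟨ρ ++ [t], isOutSeq_append hρ hrem ?_, ?_⟩)
        · rintro x ⟨hxQ, hxp⟩
          rw [← hmark]; exact ⟨hxQ, hf hxp⟩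
        · ext x
          rw [epreList_append]
          simp only [Set.mem_inter_iff, fire, Set.mem_union, Set.mem_diff]
          constructor
          · rintro ⟨hxQ, ⟨hxM, hxp⟩ | hxp⟩
            · have hx2 := (hmark' x).1 ⟨hxQ, hxM⟩
              refine ⟨hxQ, ?_⟩
              rintro (h | h)
              · exact hx2.2 h
              · rcases mem_epreList.1 h with ⟨u, hu, h1, h2⟩
                simp at hu; subst hu
                exact hxp h1
            · exact absurd hxp (hpostQ x hxQ)
          · rintro ⟨hxQ, hx⟩
            have hx1 : x ∉ epreList N ρ := fun h => hx (Or.inl h)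
            have hxM : x ∈ M := ((hmark' x).2 ⟨hxQ, hx1⟩).2
            have hxp : x ∉ N.pre t := fun h =>
              hx (Or.inr (mem_epreList.2 ⟨t, by simp, h, hpostQ x hxQ⟩))
            exact ⟨hxQ, Or.inl ⟨hxM, hxp⟩⟩
    · -- read transition
      have hpre_eq := readQ_eq hread
      apply phase_congr ?_ hph
      ext x
      simp only [Set.mem_inter_iff, fire, Set.mem_union, Set.mem_diff]
      constructor
      · rintro ⟨hxQ, ⟨hxM, _⟩ | hxp⟩
        · exact ⟨hxQ, hxM⟩
        · have : x ∈ N.pre t ∩ Q := by rw [hpre_eq]; exact ⟨hxp, hxQ⟩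
          exact ⟨hxQ, hf this.1⟩
      · rintro ⟨hxQ, hxM⟩
        by_cases hxp : x ∈ N.pre t
        · have : x ∈ N.post t ∩ Q := by rw [← hpre_eq]; exact ⟨hxp, hxQ⟩
          exact ⟨hxQ, Or.inr this.1⟩
        · exact ⟨hxQ, Or.inl ⟨hxM, hxp⟩⟩


theorem phase_reach {N : Net P T} (hs : safe N) {Q : Set P} (hQ : distPlace N Q)
    (hinitQ : Q ∩ N.minit = ∅ ∨ Q ⊆ N.minit) :
    ∀ σ, valid N N.minit σ → Phase N Q (runFrom N N.minit σ) := by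
  intro σ
  induction σ using List.reverseRecOn with
  | nil =>
    intro _
    rcases hinitQ with h | h
    · refine Or.inl ⟨[], Or.inl rfl, ?_⟩
      show Q ∩ N.minit = Q ∩ postList N []
      rw [h]
      ext x; simp [mem_postList]
    · exact Or.inr (Or.inl h)
  | append_singleton l t ih =>
    intro hv
    rw [valid_append] at hv
    obtain ⟨hv1, hv2⟩ := hv
    have hfire : fireable N t (runFrom N N.minit l) := hv2.1
    rw [runFrom_append, runFrom_single]
    exact phase_step hQ hs ⟨l, hv1, rfl⟩ hfire (ih hv1)

theorem fire_restrict (N : Net P T) (Pl : Set P) (t : T) (M : Set P) :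
    fire (restrictNet N Pl) t (M ∩ Pl) = fire N t M ∩ Pl := by
  ext x
  simp only [fire, restrictNet, Set.mem_union, Set.mem_diff, Set.mem_inter_iff]
  tauto

/-- under the distributed-place reduction hypotheses, the reduced net
has exactly the same firing sequences as the original net. -/
theorem stmt17 (N : Net P T) (DP : P → Set P) (Pl : Set P)
    (hsafe : safe N)
    (hNwf : ∀ t, (N.pre t).Nonempty)
    (hmem : ∀ p, p ∈ DP p)
    (hdp : ∀ p, distPlace N (DP p))
    (hinit : ∀ p, DP p ∩ N.minit = ∅ ∨ DP p ⊆ N.minit)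
    (hNwfT : ∀ t, ((restrictNet N Pl).pre t).Nonempty)
    (hNwfP : ∀ p ∈ Pl, (adjQ N {p}).Nonempty)
    (hadj : ∀ p, adjQ N (DP p ∩ Pl) = adjQ N (DP p))
    (hen : ∀ p, enablesQ N (DP p ∩ Pl) = enablesQ N (DP p))
    (hdis : ∀ p, disablesQ N (DP p ∩ Pl) = disablesQ N (DP p)) :
    ∀ σ, isFiringSeq N σ ↔ isFiringSeq (restrictNet N Pl) σ := by
  have hreach0 : reachable N N.minit := ⟨[], trivial, rfl⟩
  have main : ∀ σ (M : Set P), reachable N M →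
      (valid N M σ ↔ valid (restrictNet N Pl) (M ∩ Pl) σ) := by
    intro σ
    induction σ with
    | nil => intro M _; simp [valid]
    | cons t σ ih =>
      intro M hM
      have hcrux : fireable (restrictNet N Pl) t (M ∩ Pl) → fireable N t M := by
        intro h p hp
        have hph : Phase N (DP p) M := by
          obtain ⟨σ₀, hσ₀, hrun⟩ := hM
          have := phase_reach hsafe (hdp p) (hinit p) σ₀ hσ₀
          rwa [hrun] at this
        have h1 : DP p ∩ Pl ∩ N.pre t ⊆ M := by
          rintro x ⟨⟨_, hxPl⟩, hxpre⟩
          exact (h ⟨hxpre, hxPl⟩).1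
        exact crux (hdp p) (hadj p) (hen p) (hdis p) hph h1 ⟨hmem p, hp⟩
      constructor
      · rintro ⟨h1, h2⟩
        refine ⟨fun x hx => ⟨h1 hx.1, hx.2⟩, ?_⟩
        rw [fire_restrict]
        exact (ih _ (reachable_fire hM h1)).1 h2
      · rintro ⟨h1, h2⟩
        have h1' := hcrux h1
        refine ⟨h1', (ih _ (reachable_fire hM h1')).2 ?_⟩
        rw [← fire_restrict]
        exact h2
  intro σ
  exact main σ N.minit hreach0
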